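/- For the standard cross cap f₀(u,v) = (u, uv, v²) with unit normal ν₀(u,v) = (2v², -2v, u)/√(u² + 4v² + 4v⁴), the map L₀ = (f₀, ν₀) : ℝ² ∖ {(0,0)} → ℝ³ × ℝ³ is injective. -/

import Mathlib

/-!
The first and third components of `f₀` recover `u` and `v²`. Since the length
`√(u² + 4v² + 4v⁴)` of the unnormalized normal depends only on `u` and `v²`, and is nonzero
off the origin, the second component `-2v / √(u² + 4v² + 4v⁴)` of `ν₀` then recovers `v`.
-/

/-- The standard cross cap. -/
def f₀ : ℝ × ℝ → ℝ × ℝ × ℝ := fun p => (p.1, p.1 * p.2, p.2 ^ 2)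

/-- A unit normal vector field of the standard cross cap. -/
noncomputable def ν₀ : ℝ × ℝ → ℝ × ℝ × ℝ := fun p =>
  (Real.sqrt (p.1 ^ 2 + 4 * p.2 ^ 2 + 4 * p.2 ^ 4))⁻¹ •
    (2 * p.2 ^ 2, -2 * p.2, p.1)

/-- The map L₀ = (f₀, ν₀). -/
noncomputable def L₀ : ℝ × ℝ → (ℝ × ℝ × ℝ) × (ℝ × ℝ × ℝ) := fun p => (f₀ p, ν₀ p)

namespace CrossCap

/-- The squared length of the normal `(2v², -2v, u)` before normalization. -/
def normalNormSq (p : ℝ × ℝ) : ℝ := p.1 ^ 2 + 4 * p.2 ^ 2 + 4 * p.2 ^ 4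

lemma normalNormSq_pos {p : ℝ × ℝ} (hp : p ≠ 0) : 0 < normalNormSq p := by
  obtain ⟨u, v⟩ := p
  rcases eq_or_ne u 0 with rfl | hu
  · have hv : v ≠ 0 := fun hv => hp (by simp [hv])
    simp only [normalNormSq]
    positivity
  · simp only [normalNormSq]
    positivity

lemma ν₀_snd_fst (p : ℝ × ℝ) : (ν₀ p).2.1 = (√(normalNormSq p))⁻¹ * (-2 * p.2) := rfl

variable {p q : ℝ × ℝ}

lemma fst_eq_of_f₀_eq (h : f₀ p = f₀ q) : p.1 = q.1 :=
  congrArg (fun x => x.1) h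

lemma sq_snd_eq_of_f₀_eq (h : f₀ p = f₀ q) : p.2 ^ 2 = q.2 ^ 2 :=
  congrArg (fun x => x.2.2) h

lemma normalNormSq_eq_of_f₀_eq (h : f₀ p = f₀ q) : normalNormSq p = normalNormSq q := by
  have h₂ : p.2 ^ 4 = q.2 ^ 4 := by
    rw [show 4 = 2 * 2 from rfl, pow_mul, pow_mul, sq_snd_eq_of_f₀_eq h]
  simp only [normalNormSq, fst_eq_of_f₀_eq h, sq_snd_eq_of_f₀_eq h, h₂]

lemma snd_eq_of_f₀_eq_of_ν₀_eq (hp : p ≠ 0) (hf : f₀ p = f₀ q) (hν : ν₀ p = ν₀ q) :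
    p.2 = q.2 := by
  have hν₂ := congrArg (fun x => x.2.1) hν
  simp only [ν₀_snd_fst, ← normalNormSq_eq_of_f₀_eq hf] at hν₂
  have hc : (√(normalNormSq p))⁻¹ ≠ 0 :=
    inv_ne_zero (Real.sqrt_ne_zero'.mpr (normalNormSq_pos hp))
  linarith [mul_left_cancel₀ hc hν₂]

end CrossCap

theorem L0_injective :
    Set.InjOn L₀ {p : ℝ × ℝ | p ≠ ((0 : ℝ), (0 : ℝ))} := by
  intro p hp q _ hpq
  obtain ⟨hf, hν⟩ := Prod.mk.inj hpq
  exact Prod.ext (CrossCap.fst_eq_of_f₀_eq hf) (CrossCap.snd_eq_of_f₀_eq_of_ν₀_eq hp hf hν)
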